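/- Suppose there exist constants α ∈ (0,1) and B > 0 such that P(|η(X) − Q(η,1−u₀)| ≤ t) ≤ B·t^{α/(1−α)} for all t ≥ 0 (low-noise condition at the quantile). Then for every scoring function s (with mass-constrained top set C_s of μ-measure u₀), E[1_{C_s Δ C*_{u₀}}(X)] ≤ c·(L(s) − L*_{u₀})^{α} for some constant c depending only on α and B. -/

import Mathlib

open MeasureTheory Set

namespace LocalRanking

variable {Ω 𝒳 : Type*} [MeasurableSpace Ω] [MeasurableSpace 𝒳]

/-- The generalized-inverse `v`-quantile of a distribution `μ` on `ℝ`: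
`Q(μ, v) = inf {t : F(t) ≥ v}`. -/
noncomputable def quantile (μ : Measure ℝ) (v : ℝ) : ℝ :=
  sInf {t : ℝ | v ≤ (μ (Iic t)).toReal}

/-- Classification error `P(Y ≠ g(X))` of the classifier `g = 2·1_C − 1` built from a set `C`. -/
noncomputable def errSet (P : Measure Ω) (X : Ω → 𝒳) (Y : Ω → ℝ) (C : Set 𝒳) : ℝ :=
  (P {ω | (Y ω = 1 ∧ X ω ∉ C) ∨ (Y ω = -1 ∧ X ω ∈ C)}).toReal

/-!
The excess risk of `C_s` is `2 ∫_{C_s Δ C*} |η - q|`. Splitting `C_s Δ C*` according to whether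
`|η - q|` exceeds a level `t`, Markov's inequality and the low-noise condition give
`t (d - B t^{α/(1-α)}) ≤ ∫_{C_s Δ C*} |η - q|` for the mass `d` of `C_s Δ C*` and every `t ≥ 0`;
the level at which `B t^{α/(1-α)} = d / 2` yields `d ≤ (2B)^{1-α} (L(s) - L*)^α`.
-/

section SetIntegral

variable {μ : Measure 𝒳} {f : 𝒳 → ℝ}

lemma setIntegral_abs_symmDiff_setOf_nonneg (hf : Integrable f μ) (hfm : Measurable f)
    {C : Set 𝒳} (hC : MeasurableSet C) :
    ∫ x in symmDiff C {x | 0 ≤ f x}, |f x| ∂μ =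
      ∫ x in {x | 0 ≤ f x}, f x ∂μ - ∫ x in C, f x ∂μ := by
  set T := {x | 0 ≤ f x}
  have hT : MeasurableSet T := measurableSet_le measurable_const hfm
  have on_C_diff : ∫ x in C \ T, |f x| ∂μ = -∫ x in C \ T, f x ∂μ := by
    rw [← integral_neg]
    exact setIntegral_congr_fun (hC.diff hT) fun x hx => abs_of_neg (not_le.mp hx.2)
  have on_T_diff : ∫ x in T \ C, |f x| ∂μ = ∫ x in T \ C, f x ∂μ :=
    setIntegral_congr_fun (hT.diff hC) fun x hx => abs_of_nonneg hx.1
  have split_C := integral_inter_add_sdiff hT (hf.integrableOn (s := C))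
  have split_T := integral_inter_add_sdiff hC (hf.integrableOn (s := T))
  rw [Set.inter_comm] at split_T
  rw [Set.symmDiff_def, setIntegral_union disjoint_sdiff_sdiff (hT.diff hC)
      hf.abs.integrableOn hf.abs.integrableOn, on_C_diff, on_T_diff]
  linarith

lemma mul_sub_le_setIntegral_of_nonneg [IsFiniteMeasure μ] (hf : Integrable f μ) (hf0 : 0 ≤ f)
    (D : Set 𝒳) {t : ℝ} (ht : 0 ≤ t) :
    t * (μ.real D - μ.real {x | f x ≤ t}) ≤ ∫ x in D, f x ∂μ := by
  have markov : t * (μ.restrict D).real {x | t ≤ f x} ≤ ∫ x in D, f x ∂μ :=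
    mul_meas_ge_le_integral_of_nonneg (Filter.Eventually.of_forall hf0) hf.integrableOn t
  have split : μ.real D ≤ μ.real ({x | t ≤ f x} ∩ D) + μ.real {x | f x ≤ t} := by
    refine (measureReal_mono fun x hx => ?_).trans (measureReal_union_le _ _)
    rcases le_total t (f x) with h | h
    exacts [Or.inl ⟨h, hx⟩, Or.inr h]
  have restrict : μ.real ({x | t ≤ f x} ∩ D) ≤ (μ.restrict D).real {x | t ≤ f x} :=
    ENNReal.toReal_mono (measure_ne_top _ _) (Measure.le_restrict_apply _ _)
  calc t * (μ.real D - μ.real {x | f x ≤ t}) ≤ t * (μ.restrict D).real {x | t ≤ f x} := by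
        gcongr; linarith
    _ ≤ ∫ x in D, f x ∂μ := markov

end SetIntegral

lemma le_rpow_of_forall_mul_sub_rpow_le {d B α I : ℝ} (hd : 0 ≤ d) (hB : 0 < B)
    (hα : α ∈ Ioo (0 : ℝ) 1) (h : ∀ t : ℝ, 0 ≤ t → t * (d - B * t ^ (α / (1 - α))) ≤ I) :
    d ≤ (2 * B) ^ (1 - α) * (2 * I) ^ α := by
  obtain ⟨hα0, hα1⟩ := hα
  have hI : 0 ≤ I := by simpa using h 0 le_rfl
  rcases hd.eq_or_lt with rfl | hd
  · positivity
  set t := (d / (2 * B)) ^ ((1 - α) / α)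
  have hbase : 0 < d / (2 * B) := by positivity
  have ht_pow : B * t ^ (α / (1 - α)) = d / 2 := by
    have hexp : (1 - α) / α * (α / (1 - α)) = 1 := by field_simp
    rw [← Real.rpow_mul hbase.le, hexp, Real.rpow_one]
    field_simp
  have htd : t * d ≤ 2 * I := by
    have := h t (by positivity)
    rw [ht_pow] at this
    linarith
  have htd_pow : (t * d) ^ α = d / (2 * B) ^ (1 - α) := by
    rw [Real.mul_rpow (by positivity) hd.le, ← Real.rpow_mul hbase.le,
      div_mul_cancel₀ _ hα0.ne', Real.div_rpow hd.le (by positivity), div_mul_eq_mul_div,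
      ← Real.rpow_add hd, sub_add_cancel, Real.rpow_one]
  have h2B : 0 < (2 * B) ^ (1 - α) := by positivity
  have := Real.rpow_le_rpow (by positivity) htd hα0.le
  rw [htd_pow, div_le_iff₀ h2B] at this
  linarith

section Classification

variable {P : Measure Ω} [IsFiniteMeasure P] {X : Ω → 𝒳} {Y : Ω → ℝ} {η : 𝒳 → ℝ}

lemma errSet_eq (hX : Measurable X) (hY : Measurable Y) (hYval : ∀ ω, Y ω = 1 ∨ Y ω = -1)
    (hη : ∀ A : Set 𝒳, MeasurableSet A →
      (P {ω | X ω ∈ A ∧ Y ω = 1}).toReal = ∫ x in A, η x ∂(P.map X))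
    {A : Set 𝒳} (hA : MeasurableSet A) :
    errSet P X Y A = P.real (Y ⁻¹' {1}) + (P.map X).real A - 2 * ∫ x in A, η x ∂(P.map X) := by
  have hS : MeasurableSet (Y ⁻¹' {1}) := hY (measurableSet_singleton 1)
  have hset : {ω | (Y ω = 1 ∧ X ω ∉ A) ∨ (Y ω = -1 ∧ X ω ∈ A)} =
      symmDiff (Y ⁻¹' {1}) (X ⁻¹' A) := by
    ext ω
    rcases hYval ω with h | h <;> simp [Set.mem_symmDiff, h] <;> norm_num
  have hjoint : P.real (X ⁻¹' A ∩ Y ⁻¹' {1}) = ∫ x in A, η x ∂(P.map X) := hη A hA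
  have hmap : P.real (X ⁻¹' A) = (P.map X).real A := by
    rw [measureReal_def, measureReal_def, Measure.map_apply hX hA]
  have hS_diff := measureReal_inter_add_sdiff (μ := P) (s := Y ⁻¹' {1}) (hX hA)
  have hA_diff := measureReal_inter_add_sdiff (μ := P) (s := X ⁻¹' A) hS
  rw [Set.inter_comm] at hS_diff
  rw [errSet, hset, ← measureReal_def, measureReal_symmDiff_eq hS (hX hA)]
  linarith

lemma errSet_sub_errSet_eq (hX : Measurable X) (hY : Measurable Y)
    (hYval : ∀ ω, Y ω = 1 ∨ Y ω = -1)
    (hη : ∀ A : Set 𝒳, MeasurableSet A →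
      (P {ω | X ω ∈ A ∧ Y ω = 1}).toReal = ∫ x in A, η x ∂(P.map X))
    (hηint : Integrable η (P.map X)) (hηm : Measurable η) (q : ℝ) {C : Set 𝒳}
    (hC : MeasurableSet C) (hmass : (P.map X).real C = (P.map X).real {x | q ≤ η x}) :
    errSet P X Y C - errSet P X Y {x | q ≤ η x} =
      2 * ∫ x in symmDiff C {x | q ≤ η x}, |η x - q| ∂(P.map X) := by
  have hIntegral := setIntegral_abs_symmDiff_setOf_nonneg (f := fun x => η x - q)
    (hηint.sub (integrable_const q)) (hηm.sub measurable_const) hC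
  simp only [sub_nonneg] at hIntegral
  rw [hIntegral, integral_sub hηint.integrableOn (integrable_const q).integrableOn,
    integral_sub hηint.integrableOn (integrable_const q).integrableOn, setIntegral_const,
    setIntegral_const, errSet_eq hX hY hYval hη hC,
    errSet_eq hX hY hYval hη (measurableSet_le measurable_const hηm), hmass]
  simp only [smul_eq_mul]
  ring

end Classification

theorem low_noise_variance_control_general
    (P : Measure Ω) [IsProbabilityMeasure P]
    (X : Ω → 𝒳) (Y : Ω → ℝ) (η : 𝒳 → ℝ)
    (hX : Measurable X) (hY : Measurable Y) (hηm : Measurable η)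
    (hYval : ∀ ω, Y ω = 1 ∨ Y ω = -1)
    (hηbd : ∀ x, η x ∈ Icc (0 : ℝ) 1)
    (hη : ∀ A : Set 𝒳, MeasurableSet A →
      (P {ω | X ω ∈ A ∧ Y ω = 1}).toReal = ∫ x in A, η x ∂(P.map X))
    (u₀ q : ℝ)
    (hmass_star : ((P.map X) {x | q ≤ η x}).toReal = u₀)
    (α B : ℝ) (hα : α ∈ Ioo (0 : ℝ) 1) (hB : 0 < B)
    -- low-noise condition at the quantile
    (hnoise : ∀ t : ℝ, 0 ≤ t →
      ((P.map X) {x | |η x - q| ≤ t}).toReal ≤ B * t ^ (α / (1 - α))) :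
    ∃ c : ℝ, 0 < c ∧
      ∀ s : 𝒳 → ℝ, Measurable s →
        ((P.map X) {x | quantile (P.map fun ω => s (X ω)) (1 - u₀) ≤ s x}).toReal = u₀ →
        ((P.map X)
            (symmDiff {x | quantile (P.map fun ω => s (X ω)) (1 - u₀) ≤ s x}
              {x | q ≤ η x})).toReal ≤
          c * (errSet P X Y {x | quantile (P.map fun ω => s (X ω)) (1 - u₀) ≤ s x}
                - errSet P X Y {x | q ≤ η x}) ^ α := by
  refine ⟨(2 * B) ^ (1 - α), by positivity, fun s hs hmass => ?_⟩
  have : IsProbabilityMeasure (P.map X) := Measure.isProbabilityMeasure_map hX.aemeasurable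
  have hηint : Integrable η (P.map X) :=
    Integrable.of_bound hηm.aestronglyMeasurable 1 (Filter.Eventually.of_forall fun x => by
      rw [Real.norm_eq_abs, abs_of_nonneg (hηbd x).1]; exact (hηbd x).2)
  rw [errSet_sub_errSet_eq hX hY hYval hη hηint hηm q (measurableSet_le measurable_const hs)
    (hmass.trans hmass_star.symm)]
  set D := symmDiff {x | quantile (P.map fun ω => s (X ω)) (1 - u₀) ≤ s x} {x | q ≤ η x}
  refine le_rpow_of_forall_mul_sub_rpow_le measureReal_nonneg hB hα fun t ht => ?_
  calc t * ((P.map X).real D - B * t ^ (α / (1 - α)))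
      ≤ t * ((P.map X).real D - (P.map X).real {x | |η x - q| ≤ t}) := by
        gcongr; exact hnoise t ht
    _ ≤ ∫ x in D, |η x - q| ∂(P.map X) :=
        mul_sub_le_setIntegral_of_nonneg (hηint.sub (integrable_const q)).abs
          (fun x => abs_nonneg _) _ ht

/-- Under the low-noise condition
`P(|η(X) − Q(η,1−u₀)| ≤ t) ≤ B·t^{α/(1−α)}` for all `t ≥ 0`, there is a constant `c > 0`
(depending only on `α` and `B`) such that for every mass-constrained scoring function `s`,
`E[1_{C_s Δ C*_{u₀}}(X)] ≤ c·(L(s) − L*_{u₀})^α`. -/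
theorem low_noise_variance_control
    (P : Measure Ω) [IsProbabilityMeasure P]
    (X : Ω → 𝒳) (Y : Ω → ℝ) (η : 𝒳 → ℝ)
    (hX : Measurable X) (hY : Measurable Y) (hηm : Measurable η)
    (hYval : ∀ ω, Y ω = 1 ∨ Y ω = -1)
    (hηbd : ∀ x, η x ∈ Icc (0 : ℝ) 1)
    (hη : ∀ A : Set 𝒳, MeasurableSet A →
      (P {ω | X ω ∈ A ∧ Y ω = 1}).toReal = ∫ x in A, η x ∂(P.map X))
    (u₀ q : ℝ) (hu₀ : u₀ ∈ Ioo (0 : ℝ) 1)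
    (hq : q = quantile (P.map fun ω => η (X ω)) (1 - u₀))
    (hmass_star : ((P.map X) {x | q ≤ η x}).toReal = u₀)
    (α B : ℝ) (hα : α ∈ Ioo (0 : ℝ) 1) (hB : 0 < B)
    -- low-noise condition at the quantile
    (hnoise : ∀ t : ℝ, 0 ≤ t →
      ((P.map X) {x | |η x - q| ≤ t}).toReal ≤ B * t ^ (α / (1 - α))) :
    ∃ c : ℝ, 0 < c ∧
      ∀ s : 𝒳 → ℝ, Measurable s →
        ((P.map X) {x | quantile (P.map fun ω => s (X ω)) (1 - u₀) ≤ s x}).toReal = u₀ →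
        ((P.map X)
            (symmDiff {x | quantile (P.map fun ω => s (X ω)) (1 - u₀) ≤ s x}
              {x | q ≤ η x})).toReal ≤
          c * (errSet P X Y {x | quantile (P.map fun ω => s (X ω)) (1 - u₀) ≤ s x}
                - errSet P X Y {x | q ≤ η x}) ^ α :=
  low_noise_variance_control_general P X Y η hX hY hηm hYval hηbd hη u₀ q hmass_star α B hα hB
    hnoise

end LocalRanking
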